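/- arXiv:2405.07732 — 2 statements merged into one kernel-verified Lean document; each statement's English description precedes it below -/
import Mathlib

section
/- Let Z1, Z2 be independent real random variables with bounded densities f1, f2 and let c1, c2 ∈ ℝ. Then (Z1 − c1)² + (Z2 − c2)² has a density bounded above by π · (sup f1) · (sup f2). -/
open MeasureTheory ProbabilityTheory Set
open scoped ENNReal

/-!
Independence makes the joint law of `(Z1, Z2)` the product of the marginals, each dominated by
`Mᵢ` times Lebesgue measure; hence the law of `(Z1 - c1)² + (Z2 - c2)²` is dominated by `M1 M2`
times the image of planar Lebesgue measure under `p ↦ |p - c|²`. In polar coordinates, followed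
by the substitution `s = r²`, that image is `π` times Lebesgue measure on `(0, ∞)`. A measure
dominated by `C` times Lebesgue measure has a Radon–Nikodym density bounded by `C`.
-/

theorem lintegral_Ioi_comp_sq (g : ℝ → ℝ≥0∞) :
    ∫⁻ r in Ioi (0 : ℝ), ENNReal.ofReal (2 * r) * g (r ^ 2) = ∫⁻ s in Ioi (0 : ℝ), g s := by
  have himg : (fun r : ℝ => r ^ 2) '' Ioi 0 = Ioi 0 := by
    ext s
    refine ⟨fun ⟨r, hr, hs⟩ => hs ▸ pow_pos (mem_Ioi.1 hr) 2, fun hs => ?_⟩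
    exact ⟨Real.sqrt s, Real.sqrt_pos.2 hs, Real.sq_sqrt (le_of_lt hs)⟩
  conv_rhs => rw [← himg, lintegral_image_eq_lintegral_abs_deriv_mul measurableSet_Ioi
    (fun r _ => (hasDerivAt_pow 2 r).hasDerivWithinAt)
    ((pow_left_strictMonoOn₀ two_ne_zero).injOn.mono fun r hr => le_of_lt hr)]
  refine setLIntegral_congr_fun measurableSet_Ioi fun r hr => ?_
  rw [abs_of_pos (by simpa using hr)]
  norm_num

theorem lintegral_comp_sq_add_sq {g : ℝ → ℝ≥0∞} (hg : Measurable g) :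
    ∫⁻ p : ℝ × ℝ, g (p.1 ^ 2 + p.2 ^ 2) = ENNReal.ofReal Real.pi * ∫⁻ s in Ioi (0 : ℝ), g s := by
  have hpolar : ∀ p : ℝ × ℝ, (polarCoord.symm p).1 ^ 2 + (polarCoord.symm p).2 ^ 2 = p.1 ^ 2 := by
    intro p
    simp only [polarCoord_symm_apply]
    linear_combination p.1 ^ 2 * Real.cos_sq_add_sin_sq p.2
  rw [← lintegral_comp_polarCoord_symm, polarCoord_target, Measure.volume_eq_prod,
    ← Measure.prod_restrict]
  simp only [hpolar]
  rw [lintegral_prod _ (by fun_prop)]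
  simp only [lintegral_const, Measure.restrict_apply_univ, Real.volume_Ioo]
  conv_rhs => rw [← lintegral_Ioi_comp_sq, ← lintegral_const_mul _ (by fun_prop)]
  refine setLIntegral_congr_fun measurableSet_Ioi fun r hr => ?_
  rw [smul_eq_mul, sub_neg_eq_add, ← two_mul, ENNReal.ofReal_mul zero_le_two,
    ENNReal.ofReal_mul zero_le_two]
  ring

theorem map_sq_add_sq_volume :
    volume.map (fun p : ℝ × ℝ => p.1 ^ 2 + p.2 ^ 2)
      = ENNReal.ofReal Real.pi • volume.restrict (Ioi 0) := by
  refine Measure.ext_of_lintegral _ fun g hg => ?_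
  rw [lintegral_map hg (by fun_prop), lintegral_smul_measure, lintegral_comp_sq_add_sq hg,
    smul_eq_mul]

theorem map_sub_sq_add_sub_sq_volume (c₁ c₂ : ℝ) :
    volume.map (fun p : ℝ × ℝ => (p.1 - c₁) ^ 2 + (p.2 - c₂) ^ 2)
      = ENNReal.ofReal Real.pi • volume.restrict (Ioi 0) := by
  calc volume.map (fun p : ℝ × ℝ => (p.1 - c₁) ^ 2 + (p.2 - c₂) ^ 2)
      = (volume.map (· + (-c₁, -c₂))).map (fun p : ℝ × ℝ => p.1 ^ 2 + p.2 ^ 2) := by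
        rw [Measure.map_map (by fun_prop) (by fun_prop)]
        simp only [Function.comp_def, Prod.fst_add, Prod.snd_add, sub_eq_add_neg]
    _ = ENNReal.ofReal Real.pi • volume.restrict (Ioi 0) := by
        rw [map_add_right_eq_self, map_sq_add_sq_volume]

theorem withDensity_ofReal_le_smul {α : Type*} [MeasurableSpace α] (ν : Measure α)
    {f : α → ℝ} {M : ℝ} (hf : ∀ x, f x ≤ M) :
    ν.withDensity (fun x => ENNReal.ofReal (f x)) ≤ ENNReal.ofReal M • ν :=
  (withDensity_mono (ae_of_all _ fun x => ENNReal.ofReal_le_ofReal (hf x))).trans_eq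
    (withDensity_const _)

theorem map_sub_sq_add_sub_sq_prod_le {μ₁ μ₂ : Measure ℝ} {a b : ℝ≥0∞}
    (h₁ : μ₁ ≤ a • volume) (h₂ : μ₂ ≤ b • volume) (c₁ c₂ : ℝ) :
    (μ₁.prod μ₂).map (fun p : ℝ × ℝ => (p.1 - c₁) ^ 2 + (p.2 - c₂) ^ 2)
      ≤ (a * b * ENNReal.ofReal Real.pi) • volume :=
  calc (μ₁.prod μ₂).map (fun p : ℝ × ℝ => (p.1 - c₁) ^ 2 + (p.2 - c₂) ^ 2)
      ≤ ((a • volume).prod (b • volume)).map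
          (fun p : ℝ × ℝ => (p.1 - c₁) ^ 2 + (p.2 - c₂) ^ 2) :=
        Measure.map_mono (Measure.prod_mono h₁ h₂) (by fun_prop)
    _ = (a * b * ENNReal.ofReal Real.pi) • volume.restrict (Ioi 0) := by
        rw [Measure.prod_smul_left, Measure.prod_smul_right, Measure.map_smul, Measure.map_smul,
          ← Measure.volume_eq_prod, map_sub_sq_add_sub_sq_volume, smul_smul, smul_smul]
    _ ≤ (a * b * ENNReal.ofReal Real.pi) • volume := by gcongr; exact Measure.restrict_le_self

theorem MeasureTheory.Measure.exists_density_le_of_le_smul {α : Type*} [MeasurableSpace α]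
    {μ ν : Measure α} [SigmaFinite ν] {C : ℝ} (hC : 0 ≤ C) (h : μ ≤ ENNReal.ofReal C • ν) :
    ∃ g : α → ℝ, 0 ≤ g ∧ (∀ x, g x ≤ C) ∧ μ = ν.withDensity fun x => ENNReal.ofReal (g x) := by
  have : SigmaFinite μ := sigmaFinite_of_le (C.toNNReal • ν) h
  have hle : μ.rnDeriv ν ≤ᵐ[ν] fun _ => ENNReal.ofReal C := by
    refine ae_le_of_forall_setLIntegral_le_of_sigmaFinite₀
      (μ.measurable_rnDeriv ν).aemeasurable fun s hs _ => ?_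
    calc ∫⁻ x in s, μ.rnDeriv ν x ∂ν ≤ μ s := setLIntegral_rnDeriv_le s
      _ ≤ ENNReal.ofReal C * ν s := h s
      _ = ∫⁻ _ in s, ENNReal.ofReal C ∂ν := (setLIntegral_const s _).symm
  -- `∂μ/∂ν ≤ C` holds only almost everywhere, so the density is truncated at `C`.
  refine ⟨fun x => min (μ.rnDeriv ν x).toReal C, fun x => le_min ENNReal.toReal_nonneg hC,
    fun x => min_le_right _ _, ?_⟩
  refine (withDensity_rnDeriv_eq μ ν (absolutelyContinuous_of_le_smul h)).symm.trans
    (withDensity_congr_ae ?_)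
  filter_upwards [hle] with x hxC
  rw [eq_comm, min_eq_left (ENNReal.toReal_le_of_le_ofReal hC hxC),
    ENNReal.ofReal_toReal (ne_top_of_le_ne_top ENNReal.ofReal_ne_top hxC)]

/-- Let `Z1, Z2` be independent real random variables with bounded densities
`f1, f2` and let `c1, c2 ∈ ℝ`. Then `(Z1 − c1)² + (Z2 − c2)²` has a density
bounded above by `π · (sup f1) · (sup f2)`. -/
theorem stmt_14 {Ω : Type*} [MeasurableSpace Ω] (P : Measure Ω) [IsProbabilityMeasure P]
    (Z1 Z2 : Ω → ℝ) (hZ1 : Measurable Z1) (hZ2 : Measurable Z2)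
    (hind : ProbabilityTheory.IndepFun Z1 Z2 P)
    (f1 f2 : ℝ → ℝ) (hf1 : 0 ≤ f1) (hf2 : 0 ≤ f2)
    (M1 M2 : ℝ) (hM1 : ∀ s, f1 s ≤ M1) (hM2 : ∀ s, f2 s ≤ M2)
    (hd1 : P.map Z1 = volume.withDensity (fun s => ENNReal.ofReal (f1 s)))
    (hd2 : P.map Z2 = volume.withDensity (fun s => ENNReal.ofReal (f2 s)))
    (c1 c2 : ℝ) :
    ∃ g : ℝ → ℝ, 0 ≤ g ∧ (∀ s, g s ≤ Real.pi * M1 * M2) ∧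
      P.map (fun ω => (Z1 ω - c1) ^ 2 + (Z2 ω - c2) ^ 2)
        = volume.withDensity (fun s => ENNReal.ofReal (g s)) := by
  have hM1_nonneg : 0 ≤ M1 := (hf1 0).trans (hM1 0)
  have hM2_nonneg : 0 ≤ M2 := (hf2 0).trans (hM2 0)
  refine Measure.exists_density_le_of_le_smul (by positivity) ?_
  have hlaw : P.map (fun ω => (Z1 ω - c1) ^ 2 + (Z2 ω - c2) ^ 2)
      = ((P.map Z1).prod (P.map Z2)).map (fun p : ℝ × ℝ => (p.1 - c1) ^ 2 + (p.2 - c2) ^ 2) := by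
    rw [← hind.map_prod_eq_prod_map_map hZ1.aemeasurable hZ2.aemeasurable,
      Measure.map_map (by fun_prop) (hZ1.prodMk hZ2)]
    rfl
  have hC : ENNReal.ofReal (Real.pi * M1 * M2)
      = ENNReal.ofReal M1 * ENNReal.ofReal M2 * ENNReal.ofReal Real.pi := by
    rw [ENNReal.ofReal_mul (by positivity), ENNReal.ofReal_mul Real.pi_pos.le]
    ring
  rw [hlaw, hC]
  exact map_sub_sq_add_sub_sq_prod_le (hd1 ▸ withDensity_ofReal_le_smul volume hM1)
    (hd2 ▸ withDensity_ofReal_le_smul volume hM2) c1 c2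
end

section
/- Let X_1, …, X_n be points in a Hilbert space of the form X_i = A_i e_{K_i} with (e_k) orthonormal, all distances between distinct points distinct (so nearest neighbors are unique). Suppose the indices k with |{i : K_i = k}| = 1 number G_n. Then the maximal nearest-neighbor in-degree L_n of the sample satisfies L_n ≥ G_n − 1. -/
/-!
If `K i` is attained only once, then `X i` is orthogonal to every other sample point, so by
Pythagoras `‖X i - X j‖² = ‖X i‖² + ‖X j‖²` and the nearest neighbor of `X i` is the point of
smallest norm among the others. Hence every such singleton point, except possibly the global
norm minimizer `X m` itself, has `m` as its nearest neighbor, and the in-degree of `m` is at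
least `G_n - 1`.
-/

open Finset

section InnerProduct

variable {F : Type*} [NormedAddCommGroup F] [InnerProductSpace ℝ F]

theorem norm_lt_norm_of_norm_sub_lt_norm_sub {x y z : F} (hy : inner ℝ x y = 0)
    (hz : inner ℝ x z = 0) (h : ‖x - y‖ < ‖x - z‖) : ‖y‖ < ‖z‖ := by
  have hsq := mul_self_lt_mul_self (norm_nonneg _) h
  rw [norm_sub_sq_eq_norm_sq_add_norm_sq_real hy,
    norm_sub_sq_eq_norm_sq_add_norm_sq_real hz] at hsq
  exact (mul_self_lt_mul_self_iff (norm_nonneg _) (norm_nonneg _)).2 (by linarith)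

theorem Orthonormal.inner_smul_smul_eq_zero {κ : Type*} {e : κ → F} (he : Orthonormal ℝ e)
    (a b : ℝ) {k l : κ} (hkl : k ≠ l) : inner ℝ (a • e k) (b • e l) = 0 := by
  rw [real_inner_smul_left, real_inner_smul_right, he.2 hkl, mul_zero, mul_zero]

end InnerProduct

section Counting

variable {ι α : Type*} [Fintype ι] [DecidableEq α]

def singletonIndices (K : ι → α) : Finset ι :=
  {i | #{j | K j = K i} = 1}

theorem ne_of_mem_singletonIndices {K : ι → α} {i j : ι} (hi : i ∈ singletonIndices K)
    (hji : j ≠ i) : K j ≠ K i := fun hK =>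
  hji <| card_le_one.1 (mem_filter.1 hi).2.le j (by simp [hK]) i (by simp)

theorem card_filter_card_eq_one_le_card_singletonIndices (K : ι → α) :
    #{k ∈ univ.image K | #{i | K i = k} = 1} ≤ #(singletonIndices K) := by
  refine (card_le_card (t := (singletonIndices K).image K) fun k hk => ?_).trans card_image_le
  obtain ⟨hk, hcard⟩ := mem_filter.1 hk
  obtain ⟨i, -, rfl⟩ := mem_image.1 hk
  exact mem_image.2 ⟨i, mem_filter.2 ⟨mem_univ _, hcard⟩, rfl⟩

def inDegree [DecidableEq ι] (N : ι → ι) (i : ι) : ℕ :=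
  #{j | j ≠ i ∧ N j = i}

theorem card_sub_one_le_sup_inDegree [DecidableEq ι] {β : Type*} [LinearOrder β] (f : ι → β)
    (N : ι → ι) (T : Finset ι) (hT : ∀ i ∈ T, ∀ j, j ≠ i → j ≠ N i → f (N i) < f j) :
    #T - 1 ≤ univ.sup (inDegree N) := by
  rcases T.eq_empty_or_nonempty with rfl | ⟨i₀, -⟩
  · simp
  have : Nonempty ι := ⟨i₀⟩
  obtain ⟨m, hm⟩ := Finite.exists_min f
  have hpoint : ∀ i ∈ T, i ≠ m → N i = m := fun i hi him => by
    by_contra hNi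
    exact (hT i hi m (Ne.symm him) (Ne.symm hNi)).not_ge (hm (N i))
  have hsub : T.erase m ⊆ univ.filter fun j => j ≠ m ∧ N j = m := fun i hi => by
    obtain ⟨him, hiT⟩ := mem_erase.1 hi
    exact mem_filter.2 ⟨mem_univ _, him, hpoint i hiT him⟩
  calc #T - 1 ≤ #(T.erase m) := pred_card_le_card_erase
    _ ≤ inDegree N m := card_le_card hsub
    _ ≤ univ.sup (inDegree N) := le_sup (mem_univ m)

end Counting

section NearestNeighbor

variable {H : Type*} [NormedAddCommGroup H] [InnerProductSpace ℝ H]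
  {ι κ : Type*} [Fintype ι] [DecidableEq κ] {e : κ → H} {A : ι → ℝ} {K : ι → κ} {X : ι → H}

theorem inner_eq_zero_of_mem_singletonIndices (he : Orthonormal ℝ e)
    (hX : ∀ i, X i = A i • e (K i)) {i j : ι} (hi : i ∈ singletonIndices K) (hji : j ≠ i) :
    inner ℝ (X i) (X j) = 0 := by
  rw [hX, hX]
  exact he.inner_smul_smul_eq_zero _ _ (ne_of_mem_singletonIndices hi hji).symm

theorem norm_nearest_lt_of_mem_singletonIndices (he : Orthonormal ℝ e)
    (hX : ∀ i, X i = A i • e (K i)) {N : ι → ι}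
    (hN : ∀ i, N i ≠ i ∧ ∀ j, j ≠ i → j ≠ N i → ‖X i - X (N i)‖ < ‖X i - X j‖)
    {i : ι} (hi : i ∈ singletonIndices K) (j : ι) (hji : j ≠ i) (hjN : j ≠ N i) :
    ‖X (N i)‖ < ‖X j‖ :=
  norm_lt_norm_of_norm_sub_lt_norm_sub
    (inner_eq_zero_of_mem_singletonIndices he hX hi (hN i).1)
    (inner_eq_zero_of_mem_singletonIndices he hX hi hji) ((hN i).2 j hji hjN)

end NearestNeighbor

theorem stmt_18_general {H : Type*} [NormedAddCommGroup H] [InnerProductSpace ℝ H]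
    {n : ℕ}
    (e : ℕ → H) (he : Orthonormal ℝ e)
    (A : Fin n → ℝ) (K : Fin n → ℕ)
    (X : Fin n → H) (hX : ∀ i, X i = A i • e (K i))
    (N : Fin n → Fin n)
    (hN : ∀ i, N i ≠ i ∧ ∀ j, j ≠ i → j ≠ N i → ‖X i - X (N i)‖ < ‖X i - X j‖) :
    ((Finset.univ.image K).filter
        (fun k => (Finset.univ.filter (fun i : Fin n => K i = k)).card = 1)).card - 1
      ≤ Finset.univ.sup
          (fun i : Fin n => (Finset.univ.filter (fun j => j ≠ i ∧ N j = i)).card) :=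
  (Nat.sub_le_sub_right (card_filter_card_eq_one_le_card_singletonIndices K) 1).trans
    (card_sub_one_le_sup_inDegree (fun i => ‖X i‖) N _ fun _ hi =>
      norm_nearest_lt_of_mem_singletonIndices he hX hN hi)

/-- Let `X 0, …, X (n−1)` be distinct points of a real Hilbert space of the form
`X i = A i • e (K i)` with `(e_k)` orthonormal, and let `N` be the (unique, strict)
nearest-neighbor map of the sample. If `G_n` is the number of values `k` attained by
exactly one of the `K i`, then the maximal nearest-neighbor in-degree `L_n` of the
sample satisfies `L_n ≥ G_n − 1`. -/
theorem stmt_18 {H : Type*} [NormedAddCommGroup H] [InnerProductSpace ℝ H]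
    {n : ℕ} (hn : 2 ≤ n)
    (e : ℕ → H) (he : Orthonormal ℝ e)
    (A : Fin n → ℝ) (K : Fin n → ℕ)
    (X : Fin n → H) (hX : ∀ i, X i = A i • e (K i))
    (hinj : Function.Injective X)
    (N : Fin n → Fin n)
    (hN : ∀ i, N i ≠ i ∧ ∀ j, j ≠ i → j ≠ N i → ‖X i - X (N i)‖ < ‖X i - X j‖) :
    ((Finset.univ.image K).filter
        (fun k => (Finset.univ.filter (fun i : Fin n => K i = k)).card = 1)).card - 1
      ≤ Finset.univ.sup
          (fun i : Fin n => (Finset.univ.filter (fun j => j ≠ i ∧ N j = i)).card) :=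
  stmt_18_general e he A K X hX N hN
end
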